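/- Let X be a code over B, the image of an injective morphism φ : A* → B* with φ(A) = X. Then ψ_X is morphic-conservative (i.e., φ(ψ(w)) = ψ_X(φ(w)) for all w ∈ A*) if and only if every element of X is a palindrome, X is a prefix code, and ψ_X is conservative (i.e., ψ_X(X*) ⊆ X*). -/
import Mathlib


open List

/-- Right palindromic closure: `w⁺ = u Q u~` where `Q` is the longest palindromic
suffix of `w = uQ`; equivalently the shortest palindrome having `w` as a prefix. -/
noncomputable def palClosure {A : Type*} (w : List A) : List A :=
  letI : DecidablePred fun k => (w.drop k).reverse = w.drop k :=
    fun _ => Classical.propDecidable _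
  w ++ (w.take (Nat.find (⟨w.length, by simp⟩ :
    ∃ k, (w.drop k).reverse = w.drop k))).reverse

/-- The palindromization map `ψ_X` relative to a code `X`, evaluated on the
(unique) `X`-factorization `l = [x₁, …, xₙ]` of a word of `X*`. -/
noncomputable def psiList {A : Type*} (l : List (List A)) : List A :=
  l.foldl (fun p x => palClosure (p ++ x)) []

/-- The (usual) palindromization map `ψ` on words, letter by letter. -/
noncomputable def psiWord {A : Type*} (w : List A) : List A :=
  w.foldl (fun p a => palClosure (p ++ [a])) []

/-- `X` is a code: nonempty words with unique factorization over `X`. -/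
def IsCode {A : Type*} (X : Set (List A)) : Prop :=
  (∀ x ∈ X, x ≠ []) ∧
  ∀ l l' : List (List A), (∀ w ∈ l, w ∈ X) → (∀ w ∈ l', w ∈ X) →
    l.flatten = l'.flatten → l = l'

/-- `X` is a prefix code: nonempty words, none a proper prefix of another. -/
def IsPrefixCode {A : Type*} (X : Set (List A)) : Prop :=
  (∀ x ∈ X, x ≠ []) ∧ ∀ x ∈ X, ∀ y ∈ X, x <+: y → x = y

/-- `X` is a maximal prefix code over `A`. -/
def IsMaximalPrefixCode {A : Type*} (X : Set (List A)) : Prop :=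
  IsPrefixCode X ∧ ∀ Y : Set (List A), IsPrefixCode Y → X ⊆ Y → X = Y

/-- `w ∈ X*`. -/
def InStar {A : Type*} (X : Set (List A)) (w : List A) : Prop :=
  ∃ l : List (List A), (∀ u ∈ l, u ∈ X) ∧ l.flatten = w

/-- The finite word `w` is a prefix of the infinite word `s`. -/
def PrefixOfInf {A : Type*} (w : List A) (s : ℕ → A) : Prop :=
  ∀ i : ℕ, ∀ h : i < w.length, w.get ⟨i, h⟩ = s i

/-- The finite word `w` is a factor of the infinite word `s`. -/
def FactorOfInf {A : Type*} (w : List A) (s : ℕ → A) : Prop :=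
  ∃ i : ℕ, w = List.ofFn fun k : Fin w.length => s (i + k.1)

/-- `X` has finite deciphering delay. -/
def FiniteDecipheringDelay {A : Type*} (X : Set (List A)) : Prop :=
  ∃ k : ℕ, ∀ x ∈ X, ∀ x' ∈ X,
    (∃ (l l' : List (List A)) (r : List A),
      (∀ w ∈ l, w ∈ X) ∧ l.length = k ∧ (∀ w ∈ l', w ∈ X) ∧
      x ++ l.flatten ++ r = x' ++ l'.flatten) → x = x'

/-- The sequence `y = y₁y₂⋯ ∈ X^ω` is alternating. -/
def Alternating {A : Type*} (y : ℕ → List A) : Prop :=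
  ∃ a b : A, a ≠ b ∧ ∃ (lam : List A) (idx : ℕ → ℕ), StrictMono idx ∧
    ∀ k : ℕ, (lam ++ [a]) <+: y (idx (2 * k)) ∧ (lam ++ [b]) <+: y (idx (2 * k + 1))

/-- The infinite word `s` is ultimately periodic. -/
def UltimatelyPeriodic {A : Type*} (s : ℕ → A) : Prop :=
  ∃ p : ℕ, 0 < p ∧ ∃ N : ℕ, ∀ n ≥ N, s (n + p) = s n

/-- The infinite word `s` is uniformly recurrent: every factor occurs in every
sufficiently long factor of `s`. -/
def UniformlyRecurrent {A : Type*} (s : ℕ → A) : Prop :=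
  ∀ w : List A, FactorOfInf w s →
    ∃ N : ℕ, ∀ i : ℕ, w <:+: List.ofFn fun k : Fin N => s (i + k.1)

/-- Factor complexity of the infinite word `s`. -/
noncomputable def complexity {A : Type*} (s : ℕ → A) (n : ℕ) : ℕ :=
  {u : List A | u.length = n ∧ FactorOfInf u s}.ncard

/-- A word `w` is primitive if it is not a proper power. -/
def Primitive {A : Type*} (w : List A) : Prop :=
  ∀ (v : List A) (n : ℕ), 1 < n → w ≠ (List.replicate n v).flatten


section AuxPal

variable {A : Type*} {B : Type*}

private lemma pal_suffix {w z : List A} (h : (w ++ z).reverse = w ++ z)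
    (hm : z.length ≤ w.length) :
    (w.drop z.length).reverse = w.drop z.length := by
  rw [List.reverse_append] at h
  have e : w.reverse = w.drop z.length ++ z := by
    have := congrArg (List.drop z.length) h
    rwa [show z.length = z.reverse.length by simp, List.drop_left,
      List.drop_append, Nat.sub_eq_zero_of_le (by simpa using hm),
      List.drop_zero, show z.reverse.length = z.length by simp] at this
  have e2 : z.reverse ++ (w.drop z.length).reverse = w.take z.length ++ w.drop z.length := by
    rw [List.take_append_drop]
    have := congrArg List.reverse e
    simpa [List.reverse_append] using this.symm
  exact List.append_inj_right e2 (by simp [hm])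

private lemma pc_spec (w : List A) :
    ∃ k, k ≤ w.length ∧ (w.drop k).reverse = w.drop k ∧
      palClosure w = w ++ (w.take k).reverse ∧
      (∀ j, (w.drop j).reverse = w.drop j → k ≤ j) ∧
      (∀ z : List A, (w ++ z).reverse = w ++ z → k ≤ z.length) := by
  classical
  letI : DecidablePred fun k => (w.drop k).reverse = w.drop k :=
    fun _ => Classical.propDecidable _
  refine ⟨Nat.find (⟨w.length, by simp⟩ : ∃ k, (w.drop k).reverse = w.drop k),
    Nat.find_min' _ (by simp),
    Nat.find_spec (⟨w.length, by simp⟩ : ∃ k, (w.drop k).reverse = w.drop k), rfl,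
    fun j hj => Nat.find_min' _ hj, ?_⟩
  intro z hz
  rcases le_or_gt w.length z.length with h | h
  · exact le_trans (Nat.find_min' _ (by simp)) h
  · exact Nat.find_min' _ (pal_suffix hz h.le)

private lemma palClosure_pal (w : List A) : (palClosure w).reverse = palClosure w := by
  obtain ⟨k, hk, hQ, he, -, -⟩ := pc_spec w
  rw [he, List.reverse_append, List.reverse_reverse]
  have hrev : w.reverse = (w.drop k).reverse ++ (w.take k).reverse := by
    rw [← List.reverse_append, List.take_append_drop]
  rw [hrev, hQ, ← List.append_assoc, List.take_append_drop]

private lemma palClosure_of_pal {w : List A} (h : w.reverse = w) : palClosure w = w := by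
  obtain ⟨k, hk, hQ, he, -, hz⟩ := pc_spec w
  have : k ≤ 0 := by simpa using hz [] (by simpa using h)
  rw [he, Nat.le_zero.mp this]
  simp

private lemma palClosure_two {a b : A} (hab : b ≠ a) : palClosure [b, a] = [b, a, b] := by
  obtain ⟨k, hk, hQ, he, hmin, -⟩ := pc_spec [b, a]
  have h1 : k ≤ 1 := hmin 1 (by simp)
  have h0 : k ≠ 0 := by
    intro h
    rw [h] at hQ
    simp at hQ
    exact hab hQ.1.symm
  have : k = 1 := by omega
  rw [he, this]
  simp

variable {f : A → List B}

/-- The morphism associated to `f`. -/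
private def Phi (f : A → List B) (w : List A) : List B := (w.map f).flatten

@[simp] private lemma Phi_nil : Phi f [] = [] := rfl

@[simp] private lemma Phi_cons {a : A} {w : List A} : Phi f (a :: w) = f a ++ Phi f w := by
  simp [Phi]

@[simp] private lemma Phi_append {u v : List A} : Phi f (u ++ v) = Phi f u ++ Phi f v := by
  simp [Phi]

@[simp] private lemma Phi_singleton {a : A} : Phi f [a] = f a := by simp [Phi]

private lemma Phi_reverse (hf : ∀ a, (f a).reverse = f a) (w : List A) :
    Phi f w.reverse = (Phi f w).reverse := by
  induction w with
  | nil => simp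
  | cons a t ih => simp [ih, List.reverse_append, hf a]

private lemma Phi_eq_nil (hne : ∀ a : A, f a ≠ []) {w : List A} (h : Phi f w = []) :
    w = [] := by
  cases w with
  | nil => rfl
  | cons a t =>
    rw [Phi_cons, List.append_eq_nil_iff] at h
    exact absurd h.1 (hne a)

private lemma psiWord_snoc (u : List A) (a : A) :
    psiWord (u ++ [a]) = palClosure (psiWord u ++ [a]) := by
  simp [psiWord, List.foldl_append]

private lemma psiList_snoc (l : List (List A)) (x : List A) :
    psiList (l ++ [x]) = palClosure (psiList l ++ x) := by
  simp [psiList, List.foldl_append]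

private lemma flatten_prefix {X : Set (List B)} (hne : ∀ x ∈ X, x ≠ [])
    (hpc2 : ∀ x ∈ X, ∀ y ∈ X, x <+: y → x = y) :
    ∀ l l' : List (List B), (∀ w ∈ l, w ∈ X) → (∀ w ∈ l', w ∈ X) →
      l.flatten <+: l'.flatten → l <+: l' := by
  intro l
  induction l with
  | nil => intro l' _ _ _; exact List.nil_prefix
  | cons x t ih =>
    intro l' hl hl' hpre
    cases l' with
    | nil =>
      exfalso
      simp only [List.flatten_nil, List.prefix_nil] at hpre
      rw [List.flatten_cons, List.append_eq_nil_iff] at hpre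
      exact hne x (hl x (by simp)) hpre.1
    | cons y t' =>
      rw [List.flatten_cons, List.flatten_cons] at hpre
      have hx : x <+: y ++ t'.flatten := ((x.prefix_append t.flatten).trans hpre)
      have hy : y <+: y ++ t'.flatten := y.prefix_append t'.flatten
      have hxy : x = y := by
        rcases List.prefix_or_prefix_of_prefix hx hy with h | h
        · exact hpc2 x (hl x (by simp)) y (hl' y (by simp)) h
        · exact (hpc2 y (hl' y (by simp)) x (hl x (by simp)) h).symm
      subst hxy
      have ht : t.flatten <+: t'.flatten := by
        obtain ⟨r, hr⟩ := hpre
        rw [List.append_assoc] at hr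
        exact ⟨r, List.append_cancel_left hr⟩
      obtain ⟨r, hr⟩ := ih t' (fun w hw => hl w (by simp [hw]))
        (fun w hw => hl' w (by simp [hw])) ht
      exact ⟨r, by rw [List.cons_append, hr]⟩

private lemma word_prefix (finj : Function.Injective f) {X : Set (List B)}
    (hne : ∀ x ∈ X, x ≠ []) (hpc2 : ∀ x ∈ X, ∀ y ∈ X, x <+: y → x = y)
    (hran : Set.range f = X) {u m : List A} (h : Phi f u <+: Phi f m) : u <+: m := by
  have hmem : ∀ w : List A, ∀ v ∈ w.map f, v ∈ X := by
    intro w v hv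
    obtain ⟨a, -, rfl⟩ := List.mem_map.mp hv
    rw [← hran]; exact ⟨a, rfl⟩
  have hp : u.map f <+: m.map f := flatten_prefix hne hpc2 _ _ (hmem u) (hmem m) h
  have h1 : u.map f = (m.map f).take u.length := by
    have := List.prefix_iff_eq_take.mp hp
    simpa using this
  rw [← List.map_take] at h1
  have h2 : u = m.take u.length := List.map_injective_iff.mpr finj h1
  rw [h2]
  exact List.take_prefix _ _

private lemma exists_map_of_mem_range {l : List (List B)}
    (h : ∀ u ∈ l, u ∈ Set.range f) : ∃ m : List A, m.map f = l := by
  induction l with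
  | nil => exact ⟨[], rfl⟩
  | cons x t ih =>
    obtain ⟨a, ha⟩ := h x (by simp)
    obtain ⟨m, hm⟩ := ih (fun u hu => h u (by simp [hu]))
    exact ⟨a :: m, by simp [ha, hm]⟩

end AuxPal


/-- Let `φ : A* → B*` be an injective morphism with
`φ(A) = X`, `X` a code. Then `ψ_X` is morphic-conservative
(`φ ∘ ψ = ψ_X ∘ φ`) iff `X ⊆ PAL`, `X` is a prefix code, and `ψ_X` is
conservative. -/

theorem stmt18 {A : Type*} {B : Type*} [Fintype A] [Fintype B]
    (f : A → List B) (X : Set (List B)) (hX : IsCode X)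
    (hinj : Function.Injective fun w : List A => (w.map f).flatten)
    (hran : Set.range f = X) :
    (∀ w : List A, ((psiWord w).map f).flatten = psiList (w.map f)) ↔
    ((∀ x ∈ X, x.reverse = x) ∧ IsPrefixCode X ∧
      ∀ l : List (List B), (∀ u ∈ l, u ∈ X) → InStar X (psiList l)) := by
  classical
  have hPhiInj : ∀ u v : List A, Phi f u = Phi f v → u = v := fun u v h => hinj h
  have finj : Function.Injective f := by
    intro a b hab
    have h1 : Phi f [a] = Phi f [b] := by simp [hab]
    have := hPhiInj _ _ h1
    simpa using this
  have fne : ∀ a : A, f a ≠ [] := fun a => hX.1 (f a) (by rw [← hran]; exact ⟨a, rfl⟩)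
  constructor
  · intro H
    have hfa : ∀ a : A, (f a).reverse = f a := by
      intro a
      have h1 := H [a]
      have h2 : psiWord [a] = [a] := by
        show palClosure ([] ++ [a]) = [a]
        rw [List.nil_append]
        exact palClosure_of_pal (by simp)
      have h3 : psiList [f a] = palClosure (f a) := by
        show palClosure ([] ++ f a) = _
        rw [List.nil_append]
      simp only [List.map_cons, List.map_nil] at h1
      rw [h2, h3] at h1
      simp only [List.map_cons, List.map_nil, List.flatten_cons, List.flatten_nil,
        List.append_nil] at h1
      have hp := palClosure_pal (f a)
      rw [← h1] at hp
      exact hp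
    have hpalX : ∀ x ∈ X, x.reverse = x := by
      intro x hx
      rw [← hran] at hx
      obtain ⟨a, rfl⟩ := hx
      exact hfa a
    refine ⟨hpalX, ⟨hX.1, ?_⟩, ?_⟩
    · intro x hx y hy hpre
      rw [← hran] at hx hy
      obtain ⟨a, rfl⟩ := hx
      obtain ⟨b, rfl⟩ := hy
      by_cases hab : b = a
      · rw [hab]
      · exfalso
        have h1 := H [b, a]
        have h2 : psiWord [b, a] = [b, a, b] := by
          show palClosure (palClosure ([] ++ [b]) ++ [a]) = _
          rw [List.nil_append, palClosure_of_pal (by simp : ([b] : List A).reverse = [b])]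
          exact palClosure_two hab
        have h3 : psiList [f b, f a] = palClosure (f b ++ f a) := by
          show palClosure (palClosure ([] ++ f b) ++ f a) = _
          rw [List.nil_append, palClosure_of_pal (hfa b)]
        simp only [List.map_cons, List.map_nil] at h1
        rw [h2, h3] at h1
        obtain ⟨k, hk, hQ, he, hmin, -⟩ := pc_spec (f b ++ f a)
        obtain ⟨r, hr⟩ : f a <:+ f b := by
          obtain ⟨z, hz⟩ := hpre
          refine ⟨z.reverse, ?_⟩
          have hb := hfa b
          rw [← hz] at hb ⊢
          rw [List.reverse_append, hfa a] at hb
          exact hb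
        have hkr : k ≤ r.length := by
          apply hmin
          have hdrop : (f b ++ f a).drop r.length = f a ++ f a := by
            rw [← hr, List.append_assoc, List.drop_left]
          rw [hdrop, List.reverse_append, hfa a]
        have hlb : r.length + (f a).length = (f b).length := by
          have := congrArg List.length hr
          simpa using this
        have hfalen : (f a).length ≠ 0 := fun hz =>
          fne a (List.length_eq_zero_iff.mp hz)
        have hlen := congrArg List.length h1
        rw [he] at hlen
        simp only [List.map_cons, List.map_nil, List.flatten_cons, List.flatten_nil,
          List.append_nil, List.length_append, List.length_take, List.length_reverse] at hlen
        omega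
    · intro l hl
      obtain ⟨m, rfl⟩ := exists_map_of_mem_range (f := f)
        (fun u hu => by rw [hran]; exact hl u hu)
      rw [← H m]
      refine ⟨(psiWord m).map f, ?_, rfl⟩
      intro v hv
      obtain ⟨c, -, rfl⟩ := List.mem_map.mp hv
      rw [← hran]; exact ⟨c, rfl⟩
  · rintro ⟨hpalX, hpc, hcons⟩
    have hfa : ∀ a : A, (f a).reverse = f a :=
      fun a => hpalX (f a) (by rw [← hran]; exact ⟨a, rfl⟩)
    intro w
    induction w using List.reverseRecOn with
    | nil => rfl
    | append_singleton u a ih =>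
      have ih' : Phi f (psiWord u) = psiList (u.map f) := ih
      show Phi f (psiWord (u ++ [a])) = psiList ((u ++ [a]).map f)
      set p := psiWord u with hp
      obtain ⟨k, hk, hQ, he, -, hminz⟩ := pc_spec (p ++ [a])
      set s := (p ++ [a]).take k with hs
      set Q := (p ++ [a]).drop k with hQdef
      have hsplit : s ++ Q = p ++ [a] := List.take_append_drop k _
      set W := Phi f p ++ f a with hWdef
      have hW : W = Phi f (s ++ Q) := by
        rw [hsplit, Phi_append, Phi_singleton]
      obtain ⟨k', hk', hQ', he', -, hminz'⟩ := pc_spec W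
      have hPhiQ : (Phi f Q).reverse = Phi f Q := by
        rw [← Phi_reverse hfa, hQ]
      have h1 : k' ≤ (Phi f s).length := by
        have := hminz' (Phi f s).reverse (by
          rw [hW, Phi_append]
          simp [List.reverse_append, hPhiQ, List.append_assoc])
        simpa using this
      have hWL : psiList ((u ++ [a]).map f) = palClosure W := by
        rw [List.map_append, List.map_singleton, psiList_snoc, ← ih']
      have hcl : InStar X (psiList ((u ++ [a]).map f)) := by
        apply hcons
        intro v hv
        obtain ⟨c, -, rfl⟩ := List.mem_map.mp hv
        rw [← hran]; exact ⟨c, rfl⟩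
      rw [hWL] at hcl
      obtain ⟨lw, hlw, hfl⟩ := hcl
      obtain ⟨m, rfl⟩ := exists_map_of_mem_range (f := f)
        (fun v hv => by rw [hran]; exact hlw v hv)
      have hPm : Phi f m = palClosure W := hfl
      have hpre : Phi f (s ++ Q) <+: Phi f m := by
        rw [hPm, he', ← hW]
        exact ⟨(W.take k').reverse, rfl⟩
      obtain ⟨t, htm⟩ := word_prefix finj hpc.1 hpc.2 hran hpre
      have hPhit : Phi f t = (W.take k').reverse := by
        have h5 : Phi f ((s ++ Q) ++ t) = Phi f (s ++ Q) ++ Phi f t := Phi_append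
        rw [htm, hPm, he', ← hW] at h5
        exact (List.append_cancel_left h5).symm
      have hmpal : m.reverse = m := by
        apply hPhiInj
        rw [Phi_reverse hfa, hPm, palClosure_pal]
      have hkt : k ≤ t.length := by
        apply hminz t
        have hmm : (p ++ [a]) ++ t = m := by rw [← hsplit]; exact htm
        rw [hmm]
        exact hmpal
      have hsl : s.length = k := by
        rw [hs, List.length_take]
        exact min_eq_left hk
      have hsufm : s.reverse <:+ m := by
        rw [← hmpal]
        refine ⟨t.reverse ++ Q.reverse, ?_⟩
        rw [← htm]
        simp [List.reverse_append, hQ]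
      have htsufm : t <:+ m := ⟨s ++ Q, htm⟩
      have hst : s.reverse <:+ t := by
        rcases List.suffix_or_suffix_of_suffix hsufm htsufm with h | h
        · exact h
        · have heq : t = s.reverse := List.IsSuffix.eq_of_length_le h (by
            simp only [List.length_reverse, hsl]
            exact hkt)
          rw [heq]
      obtain ⟨r, hrt⟩ := hst
      have hPhir : Phi f r = [] := by
        have h2 : Phi f t = Phi f r ++ Phi f s.reverse := by rw [← hrt, Phi_append]
        have h3 : (Phi f s.reverse).length = (Phi f s).length := by
          rw [Phi_reverse hfa, List.length_reverse]
        have h4 : (Phi f t).length = k' := by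
          rw [hPhit, List.length_reverse, List.length_take]
          exact min_eq_left hk'
        have h6 := congrArg List.length h2
        rw [List.length_append] at h6
        have : (Phi f r).length = 0 := by omega
        exact List.length_eq_zero_iff.mp this
      have hr0 : r = [] := Phi_eq_nil fne hPhir
      have htval : t = s.reverse := by rw [← hrt, hr0, List.nil_append]
      rw [psiWord_snoc, hWL, ← hPm, ← htm, htval, he, ← hsplit]
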